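/- arXiv:2407.01387 — 2 statements merged into one kernel-verified Lean document; each statement's English description precedes it below -/
import Mathlib

section
/- The coloured descent set sDes is shuffle compatible: if a, b are symbol-disjoint coloured permutations and a', b' are symbol-disjoint coloured permutations with sDes(a) = sDes(a') and sDes(b) = sDes(b'), then the multisets {sDes(c) : c ∈ a⧢b} and {sDes(c') : c' ∈ a'⧢b'} are equal. -/
open scoped Classical

noncomputable section

/-- A coloured permutation: a list of (symbol, colour) pairs. -/
abbrev CPerm : Type := List (ℕ × ℕ)

/-- `a` is a genuine coloured permutation: distinct, positive symbols. -/
def IsCPerm (a : CPerm) : Prop :=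
  (a.map Prod.fst).Nodup ∧ ∀ p ∈ a, 0 < p.1

/-- The colour order on coloured integers: `p < q` iff the colour of `p` is bigger
(as an integer), or the colours agree and the symbol of `p` is smaller. -/
def cLt (p q : ℕ × ℕ) : Prop :=
  q.2 < p.2 ∨ (p.2 = q.2 ∧ p.1 < q.1)

instance : DecidableRel cLt := fun p q => by unfold cLt; infer_instance

/-- The descent set of a coloured permutation (positions `0,…,n−1`; position `i ≥ 1`
is a descent iff the `(i+1)`-st entry is smaller than the `i`-th entry (1-indexed)
in the colour order; `0` is a descent iff the first colour is nonzero). -/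
def DesSet (a : CPerm) : Finset ℕ :=
  (Finset.range a.length).filter fun i =>
    if i = 0 then (a.getD 0 (0, 0)).2 ≠ 0
    else cLt (a.getD i (0, 0)) (a.getD (i - 1) (0, 0))

/-- Descent number. -/
def des (a : CPerm) : ℕ := (DesSet a).card

/-- Comajor index. -/
def comaj (a : CPerm) : ℕ := ∑ i ∈ DesSet a, (a.length - i)

/-- `colVec a j` is the number of entries of `a` of colour `j`. -/
def colVec (a : CPerm) (j : ℕ) : ℕ := (a.map Prod.snd).count j

/-- The multiset of shuffles of two lists. -/
def shuffles {α : Type*} : List α → List α → Multiset (List α)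
  | [], bs => {bs}
  | a :: as, [] => {a :: as}
  | a :: as, b :: bs =>
      ((shuffles as (b :: bs)).map (a :: ·)) + ((shuffles (a :: as) bs).map (b :: ·))
  termination_by as bs => as.length + bs.length

/-- The set of symbols of a coloured permutation. -/
def symbols (a : CPerm) : Finset ℕ := (a.map Prod.fst).toFinset

/-- The set of nonzero colours of a coloured permutation. -/
def paletteStar (a : CPerm) : Finset ℕ := ((a.map Prod.snd).toFinset).erase 0

/-- Two coloured permutations are symbol-disjoint if they share no symbols. -/
def SymbolDisjoint (a b : CPerm) : Prop := Disjoint (symbols a) (symbols b)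

/-- `a` is `r`-coloured: all colours lie in `{0,…,r−1}`. -/
def RColoured (r : ℕ) (a : CPerm) : Prop := ∀ p ∈ a, p.2 < r

/-- Symbols of a coloured configuration (= multiset of coloured permutations). -/
def msymbols (f : Multiset CPerm) : Finset ℕ := (f.map symbols).sup

/-- `palette*` of a coloured configuration. -/
def mpalette (f : Multiset CPerm) : Finset ℕ := (f.map paletteStar).sup

/-- The shuffle of two coloured configurations (bi-additive extension). -/
def mshuffle (f g : Multiset CPerm) : Multiset CPerm :=
  f.bind fun a => g.bind fun b => shuffles a b

/-- Hadamard product of formal power series. -/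
def hadamard {R : Type*} [Semiring R] (A B : PowerSeries R) : PowerSeries R :=
  PowerSeries.mk fun k => (PowerSeries.coeff k) A * (PowerSeries.coeff k) B

/-- The geometric series `1/(1 − c·Y) = Σ_k c^k Y^k`. -/
def geom {R : Type*} [Semiring R] (c : R) : PowerSeries R :=
  PowerSeries.mk fun k => c ^ k

/-- The field ℚ(X) of rational functions. -/
abbrev K : Type := RatFunc ℚ

/-- The variable X of ℚ(X). -/
def XX : K := RatFunc.X

/-- Membership in `U = {±X^k : k ∈ ℤ}`. -/
def InU (u : K) : Prop := ∃ k : ℤ, u = XX ^ k ∨ u = -XX ^ k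

/-- `α(a) = Π_i α(γ_i)`. -/
def alphaProd (α : ℕ → K) (a : CPerm) : K := (a.map fun p => α p.2).prod

/-- The summand of `W^ε_{f,α}` corresponding to a single coloured permutation. -/
def Wterm (ε : ℤ) (α : ℕ → K) (a : CPerm) : PowerSeries K :=
  PowerSeries.C (alphaProd α a * XX ^ (ε * (comaj a : ℤ))) * PowerSeries.X ^ des a *
    ∏ i ∈ Finset.range (a.length + 1), geom (XX ^ (ε * (i : ℤ)))

/-- `W^ε_{f,α} = Σ_a f_a α(a) X^{ε·comaj(a)} Y^{des(a)} / ((1−Y)⋯(1−X^{ε|a|}Y))`. -/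
def W (ε : ℤ) (α : ℕ → K) (f : Multiset CPerm) : PowerSeries K :=
  (f.map (Wterm ε α)).sum

/-- `(f,α)` is a labelled coloured configuration. -/
def IsLCC (f : Multiset CPerm) (α : ℕ → K) : Prop :=
  (∀ a ∈ f, IsCPerm a) ∧ (∀ c, InU (α c)) ∧ (∀ c ∉ mpalette f, α c = 1)


/-- The coloured descent set `sDes(a)` of a coloured permutation: the set of pairs
`(i, γ_i)` (with `i` a 1-indexed position) such that either `i = n`, or `i < n` and
`γ_i ≠ γ_{i+1}`, or `γ_i = γ_{i+1}` and `σ_i > σ_{i+1}`. -/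
def sDes (a : CPerm) : Finset (ℕ × ℕ) :=
  ((Finset.range a.length).filter fun i =>
      i + 1 = a.length ∨ (a.getD i (0, 0)).2 ≠ (a.getD (i + 1) (0, 0)).2 ∨
        ((a.getD i (0, 0)).2 = (a.getD (i + 1) (0, 0)).2 ∧
          (a.getD (i + 1) (0, 0)).1 < (a.getD i (0, 0)).1)).image
    fun i => (i + 1, (a.getD i (0, 0)).2)


/-!
Cut a coloured permutation into its maximal runs: maximal factors of one colour with weakly
increasing symbols. `sDes` records exactly the end positions and colours of the runs, so `sDes a`
and the run decomposition `runs a` determine each other.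

Fix a list `q` of (length, colour) blocks and count the shuffles of `a` and `b` that are
concatenations of runs of these shapes. The first block of such a shuffle is a merge of a prefix
of `a` and a prefix of `b` that are runs of that colour; since `a` and `b` share no symbol, two
such runs merge into a run in exactly one way. By induction on `q` the count depends only on
`runs a` and `runs b`. A shuffle `c` fits `q` iff `runs c` arises from `q` by merging adjacent
blocks of equal colour, a unitriangular relation since merging shortens `q`; so these counts
determine the multiset of run decompositions of the shuffles, and with it the multiset of their
`sDes`.
-/

section Shuffles

variable {α : Type*}

theorem Multiset.countP_singleton (P : α → Prop) [DecidablePred P] (a : α) :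
    ({a} : Multiset α).countP P = if P a then 1 else 0 := by
  simp [Multiset.countP_eq_card_filter, Multiset.filter_singleton, apply_ite]

theorem countP_map_cons (x : α) (M : Multiset (List α)) (P : List α → Prop) [DecidablePred P] :
    (M.map (x :: ·)).countP P = M.countP fun c => P (x :: c) := by
  rw [Multiset.countP_map, Multiset.countP_eq_card_filter]

theorem shuffles_nil_left (b : List α) : shuffles [] b = {b} := by
  rw [shuffles]

theorem shuffles_nil_right (a : List α) : shuffles a [] = {a} := by
  cases a <;> rw [shuffles]

theorem shuffles_cons_cons (x y : α) (as bs : List α) :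
    shuffles (x :: as) (y :: bs) =
      (shuffles as (y :: bs)).map (x :: ·) + (shuffles (x :: as) bs).map (y :: ·) := by
  rw [shuffles]

theorem perm_of_mem_shuffles {a b c : List α} (h : c ∈ shuffles a b) : c.Perm (a ++ b) := by
  induction a, b using shuffles.induct generalizing c with
  | case1 b => simp_all [shuffles_nil_left]
  | case2 x as => simp_all [shuffles_nil_right]
  | case3 x as y bs ihx ihy =>
    rw [shuffles_cons_cons] at h
    rcases Multiset.mem_add.1 h with h | h <;> obtain ⟨c, hc, rfl⟩ := Multiset.mem_map.1 h
    · exact (ihx hc).cons x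
    · exact ((ihy hc).cons y).trans List.perm_middle.symm

theorem countP_eq_nil_shuffles (a b : List α) :
    (shuffles a b).countP (· = []) = if a = [] ∧ b = [] then 1 else 0 := by
  split_ifs with h
  · simp [h.1, h.2, shuffles_nil_left, Multiset.countP_singleton]
  · refine Multiset.countP_eq_zero.2 fun c hc hc0 => h ?_
    simpa [hc0, eq_comm (a := 0)] using (perm_of_mem_shuffles hc).length_eq

theorem countP_shuffles_forall_and (P : α → Prop) (Q : List α → Prop) [DecidablePred Q]
    [DecidablePred fun c => (∀ z ∈ c, P z) ∧ Q c] (a b : List α) :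
    (shuffles a b).countP (fun c => (∀ z ∈ c, P z) ∧ Q c) =
      if ∀ z ∈ a ++ b, P z then (shuffles a b).countP Q else 0 := by
  split_ifs with h
  · exact Multiset.countP_congr rfl fun c hc => propext <|
      and_iff_right fun z hz => h z ((perm_of_mem_shuffles hc).subset hz)
  · exact Multiset.countP_eq_zero.2 fun c hc hP =>
      h fun z hz => hP.1 z ((perm_of_mem_shuffles hc).symm.subset hz)

theorem countP_pairwise_shuffles {β : Type*} [LinearOrder β] (f : α → β) (a b : List α)
    (h : ∀ x ∈ a, ∀ y ∈ b, f x ≠ f y) :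
    (shuffles a b).countP (List.Pairwise fun x y => f x ≤ f y) =
      if a.Pairwise (fun x y => f x ≤ f y) ∧ b.Pairwise (fun x y => f x ≤ f y) then 1 else 0 := by
  induction a, b using shuffles.induct with
  | case1 b => simp [shuffles_nil_left, Multiset.countP_singleton]
  | case2 x as => simp [shuffles_nil_right, Multiset.countP_singleton]
  | case3 x as y bs ihx ihy =>
    rw [shuffles_cons_cons, Multiset.countP_add, countP_map_cons, countP_map_cons]
    simp only [List.pairwise_cons]
    rw [countP_shuffles_forall_and, countP_shuffles_forall_and,
      ihx fun x' hx' y' hy' => h x' (by simp [hx']) y' hy',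
      ihy fun x' hx' y' hy' => h x' hx' y' (by simp [hy'])]
    have hxy := h x (by simp) y (by simp)
    simp only [List.pairwise_cons, List.mem_append, List.mem_cons]
    grind

variable (P Q : List α → Prop) [DecidablePred P] [DecidablePred Q]

/-- `splitCount P Q a b (i, k)` counts the shuffles of `a` and `b` that begin with `i` letters of
`a` and `k` letters of `b`, these first `i + k` letters satisfying `P` and the rest `Q`. -/
def splitCount (a b : List α) (ik : ℕ × ℕ) : ℕ :=
  if ik.1 ≤ a.length ∧ ik.2 ≤ b.length then
    (shuffles (a.take ik.1) (b.take ik.2)).countP P *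
      (shuffles (a.drop ik.1) (b.drop ik.2)).countP Q
  else 0

theorem splitCount_cons_cons (x y : α) (as bs : List α) {ik : ℕ × ℕ} (hik : ik ≠ (0, 0)) :
    splitCount P Q (x :: as) (y :: bs) ik =
      (if ik.1 = 0 then 0
        else splitCount (fun u => P (x :: u)) Q as (y :: bs) (ik.1 - 1, ik.2)) +
      (if ik.2 = 0 then 0
        else splitCount (fun u => P (y :: u)) Q (x :: as) bs (ik.1, ik.2 - 1)) := by
  obtain ⟨_ | i, _ | k⟩ := ik
  · exact absurd rfl hik
  · simp [splitCount, shuffles_nil_left, Multiset.countP_singleton]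
  · simp [splitCount, shuffles_nil_right, Multiset.countP_singleton]
  · simp only [splitCount, List.take_succ_cons, List.drop_succ_cons, List.length_cons,
      shuffles_cons_cons, Multiset.countP_add, countP_map_cons]
    split_ifs <;> first | omega | simp_all [add_mul]

open Finset in
theorem countP_shuffles_split (l : ℕ) (a b : List α) :
    (shuffles a b).countP (fun c => l ≤ c.length ∧ P (c.take l) ∧ Q (c.drop l)) =
      ∑ ik ∈ antidiagonal l, splitCount P Q a b ik := by
  induction a, b using shuffles.induct generalizing l P with
  | case1 b =>
    rw [sum_eq_single (0, l) ?_ (by simp)]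
    · simp [splitCount, shuffles_nil_left, Multiset.countP_singleton]
      split_ifs <;> simp_all
    · intro ik hik hne
      rw [splitCount, if_neg]
      have := HasAntidiagonal.mem_antidiagonal.1 hik
      exact fun h => hne (Prod.ext (by simpa using h.1) (by simp_all))
  | case2 x as =>
    rw [sum_eq_single (l, 0) ?_ (by simp)]
    · simp [splitCount, shuffles_nil_right, Multiset.countP_singleton]
      split_ifs <;> simp_all
    · intro ik hik hne
      rw [splitCount, if_neg]
      have := HasAntidiagonal.mem_antidiagonal.1 hik
      exact fun h => hne (Prod.ext (by simp_all) (by simpa using h.2))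
  | case3 x as y bs ihx ihy =>
    cases l with
    | zero =>
      by_cases hP : P [] <;> simp [splitCount, hP, shuffles_nil_left, Multiset.countP_singleton]
    | succ n =>
      rw [shuffles_cons_cons, Multiset.countP_add, countP_map_cons, countP_map_cons]
      simp only [List.length_cons, List.take_succ_cons, List.drop_succ_cons,
        Nat.add_le_add_iff_right]
      rw [ihx (fun u => P (x :: u)) n, ihy (fun u => P (y :: u)) n,
        sum_congr rfl fun ik hik => splitCount_cons_cons P Q x y as bs <| ne_of_apply_ne
          (fun ik => ik.1 + ik.2) (by simp [HasAntidiagonal.mem_antidiagonal.1 hik]),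
        sum_add_distrib, Nat.sum_antidiagonal_succ, Nat.sum_antidiagonal_succ']
      simp

end Shuffles

theorem Multiset.countP_eq_sum_count {α : Type*} [DecidableEq α] (p : α → Prop) [DecidablePred p]
    {M : Multiset α} {T : Finset α} (hT : ∀ x ∈ M, x ∈ T) :
    M.countP p = ∑ x ∈ T, if p x then M.count x else 0 := by
  rw [Multiset.countP_eq_card_filter,
    ← Multiset.sum_count_eq_card fun x hx => hT x (Multiset.mem_of_mem_filter hx)]
  exact Finset.sum_congr rfl fun x _ => Multiset.count_filter

theorem Multiset.eq_of_forall_countP_eq {α : Type*} [DecidableEq α] {M M' : Multiset α}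
    (V : Set α) (R : α → α → Prop) (μ : α → ℕ) (hM : ∀ x ∈ M, x ∈ V) (hM' : ∀ x ∈ M', x ∈ V)
    (hrefl : ∀ x ∈ V, R x x) (hlt : ∀ x ∈ V, ∀ y, R y x → y = x ∨ μ y < μ x)
    (h : ∀ x ∈ V, M.countP (R · x) = M'.countP (R · x)) : M = M' := by
  ext x
  induction hn : μ x using Nat.strong_induction_on generalizing x with
  | _ n ih =>
    by_cases hx : x ∈ V
    swap
    · rw [Multiset.count_eq_zero.2 fun h => hx (hM x h),
        Multiset.count_eq_zero.2 fun h => hx (hM' x h)]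
    set T := insert x (M.toFinset ∪ M'.toFinset)
    have hxT : x ∈ T := Finset.mem_insert_self _ _
    have hsum := h x hx
    rw [Multiset.countP_eq_sum_count _ (T := T) fun y hy => by simp [T, hy],
      Multiset.countP_eq_sum_count _ (T := T) fun y hy => by simp [T, hy],
      ← Finset.add_sum_erase _ _ hxT, ← Finset.add_sum_erase _ _ hxT,
      if_pos (hrefl x hx), if_pos (hrefl x hx)] at hsum
    suffices hrest : ∑ y ∈ T.erase x, (if R y x then M.count y else 0) =
        ∑ y ∈ T.erase x, (if R y x then M'.count y else 0) by omega
    refine Finset.sum_congr rfl fun y hy => ?_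
    obtain ⟨hyx, hyT⟩ := Finset.mem_erase.1 hy
    split_ifs with hR
    · have hyV : y ∈ V := by
        simp only [T, Finset.mem_insert, Finset.mem_union, Multiset.mem_toFinset] at hyT
        rcases hyT with rfl | hyT | hyT
        exacts [hx, hM y hyT, hM' y hyT]
      exact ih _ (hn ▸ (hlt x hx y hR).resolve_left hyx) y rfl
    · rfl

theorem SymbolDisjoint.fst_ne {u v : CPerm} (h : SymbolDisjoint u v) {x y : ℕ × ℕ} (hx : x ∈ u)
    (hy : y ∈ v) : x.1 ≠ y.1 := fun hxy =>
  Finset.disjoint_left.1 h (List.mem_toFinset.2 (List.mem_map_of_mem hx))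
    (hxy ▸ List.mem_toFinset.2 (List.mem_map_of_mem hy))

theorem symbols_mono {u v : CPerm} (h : u ⊆ v) : symbols u ⊆ symbols v :=
  fun _ hs => List.mem_toFinset.2 (List.map_subset _ h (List.mem_toFinset.1 hs))

theorem SymbolDisjoint.mono {u v u' v' : CPerm} (h : SymbolDisjoint u v) (hu : u' ⊆ u)
    (hv : v' ⊆ v) : SymbolDisjoint u' v' :=
  Disjoint.mono (symbols_mono hu) (symbols_mono hv) h

namespace CPerm

def RunStep (p q : ℕ × ℕ) : Prop := p.2 = q.2 ∧ p.1 ≤ q.1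

/-- Lengths and colours of the maximal runs of a coloured permutation: its maximal factors whose
adjacent letters are `RunStep`s. -/
def runs : CPerm → List (ℕ × ℕ)
  | [] => []
  | [p] => [(1, p.2)]
  | p :: q :: c =>
    if RunStep p q then
      match runs (q :: c) with
      | [] => []
      | (l, col) :: t => (l + 1, col) :: t
    else (1, p.2) :: runs (q :: c)

theorem runs_cons (p : ℕ × ℕ) (c : CPerm) : ∃ m t, runs (p :: c) = (m + 1, p.2) :: t := by
  induction c generalizing p with
  | nil => exact ⟨0, [], rfl⟩
  | cons q c ih =>
    obtain ⟨m, t, ht⟩ := ih q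
    by_cases h : RunStep p q
    · exact ⟨m + 1, t, by simp [runs, h, ht, h.1]⟩
    · exact ⟨0, runs (q :: c), by simp [runs, h]⟩

theorem runs_eq_nil {c : CPerm} : runs c = [] ↔ c = [] := by
  cases c with
  | nil => simp [runs]
  | cons p c => obtain ⟨m, t, ht⟩ := runs_cons p c; simp [ht]

theorem one_le_of_mem_runs : ∀ {c : CPerm}, ∀ x ∈ runs c, 1 ≤ x.1
  | [] => by simp [runs]
  | [p] => by simp [runs]
  | p :: q :: c => by
    obtain ⟨m, t, ht⟩ := runs_cons q c
    have ih := @one_le_of_mem_runs (q :: c)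
    rw [ht, List.forall_mem_cons] at ih
    by_cases h : RunStep p q <;> simp only [runs, h, ht, if_true, if_false, List.forall_mem_cons]
    · exact ⟨by omega, ih.2⟩
    · exact ⟨le_rfl, ih⟩

def tailRuns : List (ℕ × ℕ) → List (ℕ × ℕ)
  | [] => []
  | (l, col) :: t => if l = 1 then t else (l - 1, col) :: t

theorem runs_tail (c : CPerm) : runs c.tail = tailRuns (runs c) := by
  match c with
  | [] => rfl
  | [p] => simp [runs, tailRuns]
  | p :: q :: d =>
    obtain ⟨m, t, ht⟩ := runs_cons q d
    by_cases h : RunStep p q <;> simp [runs, h, ht, tailRuns]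

theorem runs_drop (i : ℕ) (c : CPerm) : runs (c.drop i) = tailRuns^[i] (runs c) := by
  induction i generalizing c with
  | zero => rfl
  | succ i ih => rw [← List.drop_tail, ih, runs_tail, Function.iterate_succ_apply]

theorem tailRuns_iterate {l m col : ℕ} (t : List (ℕ × ℕ)) (hl : 1 ≤ l) (hlm : l ≤ m) :
    tailRuns^[l] ((m, col) :: t) = if l = m then t else (m - l, col) :: t := by
  induction l, hl using Nat.le_induction generalizing m with
  | base => by_cases hm : m = 1 <;> simp [tailRuns, hm, eq_comm]
  | succ l hl ih =>
    rw [Function.iterate_succ_apply', ih (by omega), if_neg (by omega)]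
    by_cases h : m - l = 1
    · simp [tailRuns, h, show l + 1 = m by omega]
    · simp [tailRuns, h, show l + 1 ≠ m by omega, Nat.sub_add_eq]

def IsRun (col : ℕ) (u : CPerm) : Prop :=
  (∀ p ∈ u, p.2 = col) ∧ u.Pairwise fun p q => p.1 ≤ q.1

theorem isRun_cons_cons {col : ℕ} {p q : ℕ × ℕ} {u : CPerm} :
    IsRun col (p :: q :: u) ↔ RunStep p q ∧ IsRun col (q :: u) := by
  simp only [IsRun, RunStep, List.forall_mem_cons, List.pairwise_cons]
  constructor
  · rintro ⟨⟨hp, hq, hu⟩, ⟨hpq, hpu⟩, hqu, hu'⟩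
    exact ⟨⟨hp.trans hq.symm, hpq⟩, ⟨hq, hu⟩, hqu, hu'⟩
  · rintro ⟨⟨hpq, hle⟩, ⟨hq, hu⟩, hqu, hu'⟩
    exact ⟨⟨hpq.trans hq, hq, hu⟩, ⟨hle, fun r hr => hle.trans (hqu r hr)⟩, hqu, hu'⟩

theorem take_isRun_iff (col : ℕ) : ∀ (c : CPerm) (i : ℕ),
    i ≤ c.length ∧ IsRun col (c.take i) ↔ i = 0 ∨ ∃ m t, runs c = (m, col) :: t ∧ i ≤ m
  | [], i => by simp [runs, IsRun]
  | [p], i => by rcases i with _ | _ | i <;> simp [runs, IsRun, eq_comm]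
  | p :: q :: d, 0 => by simp [IsRun]
  | p :: q :: d, 1 => by
    obtain ⟨m, t, ht⟩ := runs_cons p (q :: d)
    simp [IsRun, ht, eq_comm]
  | p :: q :: d, i + 2 => by
    have ih := take_isRun_iff col (q :: d) (i + 1)
    obtain ⟨m, t, ht⟩ := runs_cons q d
    simp only [List.take_succ_cons, List.length_cons] at ih ⊢
    rw [isRun_cons_cons]
    by_cases h : RunStep p q
    · simpa [runs, h, ht] using ih
    · simp [runs, h]

def shiftPos (l : ℕ) (S : Finset (ℕ × ℕ)) : Finset (ℕ × ℕ) := S.image fun x => (x.1 + l, x.2)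

def sDesOfRuns : List (ℕ × ℕ) → Finset (ℕ × ℕ)
  | [] => ∅
  | (l, col) :: t => insert (l, col) (shiftPos l (sDesOfRuns t))

theorem mem_sDes {c : CPerm} {x : ℕ × ℕ} :
    x ∈ sDes c ↔ ∃ i < c.length,
      (i + 1 = c.length ∨ ¬RunStep (c.getD i (0, 0)) (c.getD (i + 1) (0, 0))) ∧
        (i + 1, (c.getD i (0, 0)).2) = x := by
  simp only [sDes, RunStep, Finset.mem_image, Finset.mem_filter, Finset.mem_range, not_and_or,
    not_le, and_assoc]
  grind

theorem sDes_cons_cons (p q : ℕ × ℕ) (d : CPerm) :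
    sDes (p :: q :: d) = if RunStep p q then shiftPos 1 (sDes (q :: d))
      else insert (1, p.2) (shiftPos 1 (sDes (q :: d))) := by
  ext x
  rw [mem_sDes, ← Nat.or_exists_add_one]
  split_ifs with h <;> simp [shiftPos, mem_sDes, h, eq_comm, and_assoc]

theorem sDes_eq_sDesOfRuns : ∀ c : CPerm, sDes c = sDesOfRuns (runs c)
  | [] => by simp [sDes, runs, sDesOfRuns]
  | [p] => by simp [sDes, runs, sDesOfRuns, shiftPos, Finset.filter_singleton]
  | p :: q :: d => by
    obtain ⟨m, t, ht⟩ := runs_cons q d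
    have ih := sDes_eq_sDesOfRuns (q :: d)
    rw [ht] at ih
    rw [sDes_cons_cons, ih]
    by_cases h : RunStep p q
    · simp [runs, h, ht, sDesOfRuns, shiftPos, Finset.image_image, Function.comp_def, add_assoc]
    · simp [runs, h, ht, sDesOfRuns]

theorem lt_of_mem_shiftPos_sDesOfRuns {l : ℕ} {t : List (ℕ × ℕ)} (ht : ∀ y ∈ t, 1 ≤ y.1)
    {x : ℕ × ℕ} (hx : x ∈ shiftPos l (sDesOfRuns t)) : l < x.1 := by
  induction t generalizing l x with
  | nil => simp [shiftPos, sDesOfRuns] at hx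
  | cons y t ih =>
    obtain ⟨z, hz, rfl⟩ := Finset.mem_image.1 hx
    simp only [sDesOfRuns, Finset.mem_insert] at hz
    rcases hz with rfl | hz
    · have := ht y (by simp)
      simp only
      omega
    · have := ih (fun y hy => ht y (List.mem_cons_of_mem _ hy)) hz
      omega

theorem sDesOfRuns_inj {r r' : List (ℕ × ℕ)} (hr : ∀ x ∈ r, 1 ≤ x.1) (hr' : ∀ x ∈ r', 1 ≤ x.1)
    (h : sDesOfRuns r = sDesOfRuns r') : r = r' := by
  induction r generalizing r' with
  | nil =>
    cases r' with
    | nil => rfl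
    | cons => exact absurd h.symm (Finset.insert_ne_empty _ _)
  | cons x t ih =>
    obtain _ | ⟨x', t'⟩ := r'
    · simp [sDesOfRuns] at h
    obtain ⟨l, col⟩ := x
    obtain ⟨l', col'⟩ := x'
    have ht : ∀ y ∈ t, 1 ≤ y.1 := fun y hy => hr y (List.mem_cons_of_mem _ hy)
    have ht' : ∀ y ∈ t', 1 ≤ y.1 := fun y hy => hr' y (List.mem_cons_of_mem _ hy)
    simp only [sDesOfRuns] at h
    have hx : (l, col) = (l', col') := by
      have h1 : (l, col) ∈ insert (l', col') (shiftPos l' (sDesOfRuns t')) := h ▸ by simp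
      have h2 : (l', col') ∈ insert (l, col) (shiftPos l (sDesOfRuns t)) := h ▸ by simp
      rcases Finset.mem_insert.1 h1 with h1 | h1
      · exact h1
      rcases Finset.mem_insert.1 h2 with h2 | h2
      · exact h2.symm
      exact absurd ((lt_of_mem_shiftPos_sDesOfRuns ht h2).trans
        (lt_of_mem_shiftPos_sDesOfRuns ht' h1)) (lt_irrefl l)
    obtain ⟨rfl, rfl⟩ := Prod.ext_iff.1 hx
    have hS : shiftPos l (sDesOfRuns t) = shiftPos l (sDesOfRuns t') := by
      have := congrArg (·.erase (l, col)) h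
      rwa [Finset.erase_insert fun hmem => (lt_of_mem_shiftPos_sDesOfRuns ht hmem).false,
        Finset.erase_insert fun hmem => (lt_of_mem_shiftPos_sDesOfRuns ht' hmem).false] at this
    rw [ih ht ht' (Finset.image_injective (fun y z hyz => by simp_all [Prod.ext_iff]) hS)]

theorem runs_eq_of_sDes_eq {a a' : CPerm} (h : sDes a = sDes a') : runs a = runs a' :=
  sDesOfRuns_inj one_le_of_mem_runs one_le_of_mem_runs
    (by rw [← sDes_eq_sDesOfRuns, ← sDes_eq_sDesOfRuns, h])

def Fits : List (ℕ × ℕ) → CPerm → Prop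
  | [], c => c = []
  | (l, col) :: q, c => l ≤ c.length ∧ IsRun col (c.take l) ∧ Fits q (c.drop l)

/-- For `q` with positive lengths, `FitsRuns q r` says that `r` arises from `q` by merging
adjacent blocks of equal colour. -/
def FitsRuns : List (ℕ × ℕ) → List (ℕ × ℕ) → Prop
  | [], r => r = []
  | (l, col) :: q, r => (l = 0 ∨ ∃ m t, r = (m, col) :: t ∧ l ≤ m) ∧ FitsRuns q (tailRuns^[l] r)

theorem fits_iff_fitsRuns (q : List (ℕ × ℕ)) (c : CPerm) : Fits q c ↔ FitsRuns q (runs c) := by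
  induction q generalizing c with
  | nil => exact runs_eq_nil.symm
  | cons lc q ih =>
    obtain ⟨l, col⟩ := lc
    rw [Fits, FitsRuns, ← and_assoc, take_isRun_iff, ih, runs_drop]

theorem fitsRuns_self {r : List (ℕ × ℕ)} (hr : ∀ x ∈ r, 1 ≤ x.1) : FitsRuns r r := by
  induction r with
  | nil => rfl
  | cons x t ih =>
    obtain ⟨l, col⟩ := x
    have hl : 1 ≤ l := hr _ List.mem_cons_self
    refine ⟨Or.inr ⟨l, t, rfl, le_rfl⟩, ?_⟩
    rw [tailRuns_iterate t hl le_rfl, if_pos rfl]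
    exact ih fun y hy => hr y (List.mem_cons_of_mem _ hy)

theorem FitsRuns.eq_or_length_lt {q r : List (ℕ × ℕ)} (hq : ∀ x ∈ q, 1 ≤ x.1)
    (h : FitsRuns q r) : r = q ∨ r.length < q.length := by
  induction q generalizing r with
  | nil => exact Or.inl h
  | cons x q ih =>
    obtain ⟨l, col⟩ := x
    have hl : 1 ≤ l := hq _ List.mem_cons_self
    have hq' : ∀ y ∈ q, 1 ≤ y.1 := fun y hy => hq y (List.mem_cons_of_mem _ hy)
    obtain ⟨hl0 | ⟨m, t, rfl, hlm⟩, hfit⟩ := h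
    · omega
    rw [tailRuns_iterate t hl hlm] at hfit
    split_ifs at hfit with hm
    · subst hm
      rcases ih hq' hfit with rfl | hlt
      · exact Or.inl rfl
      · exact Or.inr (by simpa using hlt)
    · rcases ih hq' hfit with h | hlt
      · exact Or.inr (by simp [← h])
      · simp only [List.length_cons] at hlt ⊢
        omega

theorem countP_isRun_shuffles (col : ℕ) {u v : CPerm} (huv : SymbolDisjoint u v) :
    (shuffles u v).countP (IsRun col) = if IsRun col u ∧ IsRun col v then 1 else 0 := by
  unfold IsRun
  rw [countP_shuffles_forall_and, countP_pairwise_shuffles _ _ _ fun x hx y hy => huv.fst_ne hx hy]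
  simp only [List.forall_mem_append]
  split_ifs <;> tauto

theorem countP_fits_shuffles_congr (q : List (ℕ × ℕ)) {a b a' b' : CPerm}
    (hab : SymbolDisjoint a b) (hab' : SymbolDisjoint a' b')
    (ha : runs a = runs a') (hb : runs b = runs b') :
    (shuffles a b).countP (Fits q) = (shuffles a' b').countP (Fits q) := by
  induction q generalizing a b a' b' with
  | nil =>
    have key (a b : CPerm) : (shuffles a b).countP (Fits []) = if a = [] ∧ b = [] then 1 else 0 :=
      (Multiset.countP_congr (p := Fits []) (p' := (· = [])) rfl fun _ _ => rfl).trans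
        (countP_eq_nil_shuffles a b)
    simp only [key, ← runs_eq_nil (c := a), ← runs_eq_nil (c := b), ha, hb, runs_eq_nil]
  | cons lc q ih =>
    obtain ⟨l, col⟩ := lc
    have key (a b : CPerm) : (shuffles a b).countP (Fits ((l, col) :: q)) = _ :=
      (Multiset.countP_congr (p := Fits ((l, col) :: q))
        (p' := fun c => l ≤ c.length ∧ IsRun col (c.take l) ∧ Fits q (c.drop l)) rfl
          fun _ _ => rfl).trans (countP_shuffles_split (IsRun col) (Fits q) l a b)
    rw [key, key]
    refine Finset.sum_congr rfl fun ⟨i, k⟩ _ => ?_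
    unfold splitCount
    have hi : i ≤ a.length ∧ IsRun col (a.take i) ↔ i ≤ a'.length ∧ IsRun col (a'.take i) := by
      rw [take_isRun_iff, take_isRun_iff, ha]
    have hk : k ≤ b.length ∧ IsRun col (b.take k) ↔ k ≤ b'.length ∧ IsRun col (b'.take k) := by
      rw [take_isRun_iff, take_isRun_iff, hb]
    rw [countP_isRun_shuffles col (hab.mono (List.take_subset _ _) (List.take_subset _ _)),
      countP_isRun_shuffles col (hab'.mono (List.take_subset _ _) (List.take_subset _ _)),
      ih (hab.mono (List.drop_subset _ _) (List.drop_subset _ _))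
        (hab'.mono (List.drop_subset _ _) (List.drop_subset _ _))
        (by rw [runs_drop, runs_drop, ha]) (by rw [runs_drop, runs_drop, hb])]
    simp only [ite_mul, one_mul, zero_mul, ← ite_and]
    exact if_congr (by tauto) rfl rfl

theorem map_runs_shuffles_eq {a b a' b' : CPerm} (hab : SymbolDisjoint a b)
    (hab' : SymbolDisjoint a' b') (ha : runs a = runs a') (hb : runs b = runs b') :
    (shuffles a b).map runs = (shuffles a' b').map runs := by
  refine Multiset.eq_of_forall_countP_eq {r | ∀ x ∈ r, 1 ≤ x.1} (fun r q => FitsRuns q r)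
    List.length ?_ ?_ (fun q hq => fitsRuns_self hq) (fun q hq r => FitsRuns.eq_or_length_lt hq)
    fun q _ => ?_
  · simpa using fun c _ => one_le_of_mem_runs
  · simpa using fun c _ => one_le_of_mem_runs
  simp only [Multiset.countP_map, ← fits_iff_fitsRuns, ← Multiset.countP_eq_card_filter]
  exact countP_fits_shuffles_congr q hab hab' ha hb

end CPerm

theorem sDes_shuffleCompatible_general (a b a' b' : CPerm)
    (hab : SymbolDisjoint a b) (hab' : SymbolDisjoint a' b')
    (hsa : sDes a = sDes a') (hsb : sDes b = sDes b') :
    (shuffles a b).map sDes = (shuffles a' b').map sDes := by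
  have hs : sDes = CPerm.sDesOfRuns ∘ CPerm.runs := funext CPerm.sDes_eq_sDesOfRuns
  rw [hs, ← Multiset.map_map, ← Multiset.map_map, CPerm.map_runs_shuffles_eq hab hab'
    (CPerm.runs_eq_of_sDes_eq hsa) (CPerm.runs_eq_of_sDes_eq hsb)]

/-- **Corollary.** The coloured descent set `sDes` is shuffle compatible. -/
theorem sDes_shuffleCompatible (a b a' b' : CPerm)
    (ha : IsCPerm a) (hb : IsCPerm b) (ha' : IsCPerm a') (hb' : IsCPerm b')
    (hab : SymbolDisjoint a b) (hab' : SymbolDisjoint a' b')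
    (hsa : sDes a = sDes a') (hsb : sDes b = sDes b') :
    (shuffles a b).map sDes = (shuffles a' b').map sDes :=
  sDes_shuffleCompatible_general a b a' b' hab hab' hsa hsb
end
end

section
/- Fix r ≥ 1 and let st be any coloured descent statistic on r-coloured permutations, i.e., a function such that st(a) = st(b) whenever sDes(a) = sDes(b); write st(A) for its common value on permutations with coloured descent set A, and len(A) for the common length (len(∅) = 0, and len(A) is the largest first coordinate occurring in A otherwise). Suppose there exist a commutative ℚ-algebra B and a function φ from r-coloured subsets to B such that: (0) for all symbol-disjoint r-coloured permutations a, b one has φ(sDes(a))·φ(sDes(b)) = Σ_{c ∈ a⧢b} φ(sDes(c)); (i) φ(A) = φ(B) whenever st(A) = st(B) and len(A) = len(B); (ii) whenever A₁, A₂, … are r-coloured subsets with the pairs (st(A_i), len(A_i)) pairwise distinct, the elements φ(A₁), φ(A₂), … are ℚ-linearly independent in B. Then st is shuffle compatible: for symbol-disjoint a,b and symbol-disjoint a',b' with |a| = |a'|, |b| = |b'|, st(a) = st(a'), st(b) = st(b'), the multisets {st(c) : c ∈ a⧢b} and {st(c') : c' ∈ a'⧢b'} are equal. -/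
open scoped Classical

noncomputable section

/-! Applying `φ ∘ sDes` to both shuffle multisets gives equal sums, by the product rule (0) and
by (i) for the pairs `a, a'` and `b, b'`. By (i) each summand depends only on `(st c, |c|)`, so
each sum is a combination, with the multiplicities of these pairs as natural coefficients, of
elements that are `ℚ`-linearly independent by (ii). Hence the multisets of pairs
`(st c, |c|)` over the two shuffle sets agree, and so do their first components. -/

section LinearIndependence

variable {R V Y : Type*} [Semiring R] [AddCommMonoid V] [Module R V]

theorem linearIndepOn_of_forall_fin {ψ : Y → V} {t : Set Y}
    (h : ∀ (k : ℕ) (y : Fin k → Y), (∀ i, y i ∈ t) → Function.Injective y →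
      LinearIndependent R (ψ ∘ y)) :
    LinearIndepOn R ψ t := by
  refine linearIndependent_iff_finset_linearIndependent.mpr fun u => ?_
  let e := u.equivFin
  have hy : Function.Injective fun i => ((e.symm i : t) : Y) :=
    Subtype.val_injective.comp (Subtype.val_injective.comp e.symm.injective)
  exact (linearIndependent_equiv e.symm).mp (h _ _ (fun i => (e.symm i : t).2) hy)

theorem Multiset.sum_map_eq_sum_count_smul [DecidableEq Y] (ψ : Y → V) {N : Multiset Y}
    {u : Finset Y} (hN : N.toFinset ⊆ u) :
    (N.map ψ).sum = ∑ y ∈ u, (N.count y : R) • ψ y := by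
  simp_rw [Finset.sum_multiset_map_count, Nat.cast_smul_eq_nsmul]
  refine Finset.sum_subset hN fun y _ hy => ?_
  rw [Multiset.count_eq_zero.mpr (Multiset.mem_toFinset.not.mp hy), zero_smul]

theorem LinearIndepOn.eq_of_sum_map_eq [CharZero R] {ψ : Y → V} {t : Set Y}
    (hψ : LinearIndepOn R ψ t) {N N' : Multiset Y} (hN : ∀ y ∈ N, y ∈ t)
    (hN' : ∀ y ∈ N', y ∈ t) (h : (N.map ψ).sum = (N'.map ψ).sum) : N = N' := by
  classical
  set u := (N + N').toFinset
  have hu : LinearIndepOn R ψ (u : Set Y) := hψ.mono fun y hy => by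
    rcases Multiset.mem_add.mp (Multiset.mem_toFinset.mp hy) with hy | hy
    exacts [hN y hy, hN' y hy]
  have hcount := linearIndepOn_finset_iffₛ.mp hu (fun y => (N.count y : R))
    (fun y => (N'.count y : R)) (by
      rwa [← Multiset.sum_map_eq_sum_count_smul, ← Multiset.sum_map_eq_sum_count_smul]
      all_goals exact fun y hy => by simp_all [u])
  ext y
  by_cases hy : y ∈ u
  · exact_mod_cast hcount y hy
  · simp only [u, Multiset.mem_toFinset, Multiset.mem_add, not_or] at hy
    rw [Multiset.count_eq_zero.mpr hy.1, Multiset.count_eq_zero.mpr hy.2]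

end LinearIndependence

theorem Multiset.map_eq_map_of_sum_map_eq {R V X Y : Type*} [Semiring R] [CharZero R]
    [AddCommMonoid V] [Nonempty X] [Module R V] {key : X → Y} {f : X → V} {s : Set X}
    (hf : ∀ c ∈ s, ∀ d ∈ s, key c = key d → f c = f d)
    (hind : ∀ (k : ℕ) (a : Fin k → X), (∀ i, a i ∈ s) → Function.Injective (key ∘ a) →
      LinearIndependent R (f ∘ a))
    {M M' : Multiset X} (hM : ∀ c ∈ M, c ∈ s) (hM' : ∀ c ∈ M', c ∈ s)
    (h : (M.map f).sum = (M'.map f).sum) :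
    M.map key = M'.map key := by
  set rep := Function.invFunOn key s
  have hψ : LinearIndepOn R (f ∘ rep) (key '' s) :=
    linearIndepOn_of_forall_fin fun k y hy hinj => by
      have hkey : key ∘ rep ∘ y = y := funext fun i => Function.invFunOn_eq (hy i)
      exact hind k (rep ∘ y) (fun i => Function.invFunOn_mem (hy i)) (by rwa [hkey])
  have hsum : ∀ N : Multiset X, (∀ c ∈ N, c ∈ s) →
      (N.map f).sum = ((N.map key).map (f ∘ rep)).sum := fun N hN => by
    rw [Multiset.map_map]
    refine congrArg Multiset.sum (Multiset.map_congr rfl fun c hc => ?_)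
    exact hf c (hN c hc) _ (Function.invFunOn_mem ⟨c, hN c hc, rfl⟩)
      (Function.invFunOn_eq ⟨c, hN c hc, rfl⟩).symm
  refine hψ.eq_of_sum_map_eq (R := R) ?_ ?_ ((hsum M hM).symm.trans (h.trans (hsum M' hM')))
  · simpa using fun c hc => Set.mem_image_of_mem key (hM c hc)
  · simpa using fun c hc => Set.mem_image_of_mem key (hM' c hc)

theorem perm_append_of_mem_shuffles {α : Type*} :
    ∀ (a b : List α), ∀ c ∈ shuffles a b, c.Perm (a ++ b)
  | [], b => by
      simp [shuffles]
  | x :: a, [] => by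
      simp [shuffles]
  | x :: a, y :: b => by
      simp only [shuffles, Multiset.mem_add, Multiset.mem_map]
      rintro c (⟨d, hd, rfl⟩ | ⟨d, hd, rfl⟩)
      · exact (perm_append_of_mem_shuffles a (y :: b) d hd).cons x
      · exact ((perm_append_of_mem_shuffles (x :: a) b d hd).cons y).trans List.perm_middle.symm
  termination_by a b => a.length + b.length

theorem IsCPerm.of_perm {a b : CPerm} (ha : IsCPerm a) (h : b.Perm a) : IsCPerm b :=
  ⟨(h.map Prod.fst).nodup_iff.mpr ha.1, fun p hp => ha.2 p (h.subset hp)⟩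

theorem IsCPerm.append {a b : CPerm} (ha : IsCPerm a) (hb : IsCPerm b)
    (hab : SymbolDisjoint a b) : IsCPerm (a ++ b) := by
  refine ⟨?_, fun p hp => (List.mem_append.mp hp).elim (ha.2 p) (hb.2 p)⟩
  rw [List.map_append]
  exact ha.1.append hb.1 fun x hxa hxb =>
    Finset.disjoint_left.mp hab (List.mem_toFinset.mpr hxa) (List.mem_toFinset.mpr hxb)

theorem RColoured.of_perm {r : ℕ} {a b : CPerm} (ha : RColoured r a) (h : b.Perm a) :
    RColoured r b :=
  fun p hp => ha p (h.subset hp)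

theorem RColoured.append {r : ℕ} {a b : CPerm} (ha : RColoured r a) (hb : RColoured r b) :
    RColoured r (a ++ b) :=
  fun p hp => (List.mem_append.mp hp).elim (ha p) (hb p)

theorem shuffleCompatible_of_qsym_factorization_general
    (r : ℕ) {S : Type*} (st : CPerm → S)
    (B : Type*) [CommRing B] [Algebra ℚ B] (φ : Finset (ℕ × ℕ) → B)
    (h0 : ∀ a b : CPerm, IsCPerm a → IsCPerm b → RColoured r a → RColoured r b →
      SymbolDisjoint a b →
      φ (sDes a) * φ (sDes b) = ((shuffles a b).map fun c => φ (sDes c)).sum)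
    (hi : ∀ a b : CPerm, IsCPerm a → IsCPerm b → RColoured r a → RColoured r b →
      st a = st b → a.length = b.length → φ (sDes a) = φ (sDes b))
    (hii : ∀ (k : ℕ) (a : Fin k → CPerm), (∀ i, IsCPerm (a i)) →
      (∀ i, RColoured r (a i)) →
      (Function.Injective fun i => (st (a i), (a i).length)) →
      LinearIndependent ℚ fun i => φ (sDes (a i))) :
    ∀ a b a' b' : CPerm, IsCPerm a → IsCPerm b → IsCPerm a' → IsCPerm b' →
      RColoured r a → RColoured r b → RColoured r a' → RColoured r b' →
      SymbolDisjoint a b → SymbolDisjoint a' b' →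
      a.length = a'.length → b.length = b'.length →
      st a = st a' → st b = st b' →
      (shuffles a b).map st = (shuffles a' b').map st := by
  intro a b a' b' ha hb ha' hb' hra hrb hra' hrb' hab hab' hla hlb hsa hsb
  have hsum : ((shuffles a b).map fun c => φ (sDes c)).sum
      = ((shuffles a' b').map fun c => φ (sDes c)).sum := by
    rw [← h0 a b ha hb hra hrb hab, ← h0 a' b' ha' hb' hra' hrb' hab',
      hi a a' ha ha' hra hra' hsa hla, hi b b' hb hb' hrb hrb' hsb hlb]
  have hmem : ∀ {a b : CPerm}, IsCPerm a → IsCPerm b → RColoured r a → RColoured r b →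
      SymbolDisjoint a b → ∀ c ∈ shuffles a b, IsCPerm c ∧ RColoured r c :=
    fun ha hb hra hrb hab c hc =>
      ⟨(ha.append hb hab).of_perm (perm_append_of_mem_shuffles _ _ c hc),
        (hra.append hrb).of_perm (perm_append_of_mem_shuffles _ _ c hc)⟩
  have hpairs := Multiset.map_eq_map_of_sum_map_eq (R := ℚ)
    (key := fun c => (st c, c.length)) (s := {c | IsCPerm c ∧ RColoured r c})
    (fun c hc d hd hcd => hi c d hc.1 hd.1 hc.2 hd.2 (congrArg Prod.fst hcd)
      (congrArg Prod.snd hcd))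
    (fun k a has => hii k a (fun i => (has i).1) (fun i => (has i).2))
    (hmem ha hb hra hrb hab) (hmem ha' hb' hra' hrb' hab') hsum
  simpa only [Multiset.map_map, Function.comp_def] using congrArg (Multiset.map Prod.fst) hpairs

/-- **Lemma.** A coloured descent statistic `st` on `r`-coloured permutations
(`st` factors through `sDes`) is shuffle compatible provided there are a commutative
`ℚ`-algebra `B` and a function `φ` on coloured descent sets such that:
(0) `φ(sDes(a))·φ(sDes(b)) = Σ_{c ∈ a⧢b} φ(sDes(c))` for symbol-disjoint `a,b`
(the product rule for coloured quasisymmetric functions);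
(i) `φ(sDes(a))` depends only on `(st(a), |a|)`; and
(ii) values `φ(sDes(a_i))` at permutations with pairwise distinct `(st(a_i), |a_i|)`
are `ℚ`-linearly independent. -/
theorem shuffleCompatible_of_qsym_factorization
    (r : ℕ) (hr : 1 ≤ r) {S : Type*} (st : CPerm → S)
    (hdesc : ∀ a b : CPerm, IsCPerm a → IsCPerm b → RColoured r a → RColoured r b →
      sDes a = sDes b → st a = st b)
    (B : Type*) [CommRing B] [Algebra ℚ B] (φ : Finset (ℕ × ℕ) → B)
    (h0 : ∀ a b : CPerm, IsCPerm a → IsCPerm b → RColoured r a → RColoured r b →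
      SymbolDisjoint a b →
      φ (sDes a) * φ (sDes b) = ((shuffles a b).map fun c => φ (sDes c)).sum)
    (hi : ∀ a b : CPerm, IsCPerm a → IsCPerm b → RColoured r a → RColoured r b →
      st a = st b → a.length = b.length → φ (sDes a) = φ (sDes b))
    (hii : ∀ (k : ℕ) (a : Fin k → CPerm), (∀ i, IsCPerm (a i)) →
      (∀ i, RColoured r (a i)) →
      (Function.Injective fun i => (st (a i), (a i).length)) →
      LinearIndependent ℚ fun i => φ (sDes (a i))) :
    ∀ a b a' b' : CPerm, IsCPerm a → IsCPerm b → IsCPerm a' → IsCPerm b' →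
      RColoured r a → RColoured r b → RColoured r a' → RColoured r b' →
      SymbolDisjoint a b → SymbolDisjoint a' b' →
      a.length = a'.length → b.length = b'.length →
      st a = st a' → st b = st b' →
      (shuffles a b).map st = (shuffles a' b').map st :=
  shuffleCompatible_of_qsym_factorization_general r st B φ h0 hi hii

end
end
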